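/- Let φ = x₁² and let Ω ⊆ ℝⁿ be a domain. For every u ∈ C_c^∞(Ω, ℝ_n): ‖Du − (Dφ)u‖²_φ = ‖D(e₁ u)‖²_φ + 2 ‖u‖²_φ; in particular ‖Du − (Dφ)u‖²_φ ≥ 2 ‖u‖²_φ. -/

import Mathlib

open scoped BigOperators
open MeasureTheory

noncomputable section

/-- The real Clifford algebra `ℝ_n`, realized concretely as the space of
coefficient families indexed by subsets `A ⊆ {1,…,n}` (the standard basis `e_A`). -/
abbrev Cl (n : ℕ) : Type := Finset (Fin n) → ℝ

namespace Cliff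

variable {n : ℕ}

/-- The sign occurring in `e_A * e_B = csign A B • e_{A ∆ B}` for the Clifford algebra
with relations `e_j ^ 2 = -1` and `e_j e_k = - e_k e_j` (`j ≠ k`). -/
def csign (A B : Finset (Fin n)) : ℝ :=
  (-1 : ℝ) ^ ((((A ×ˢ B).filter fun p => p.2 < p.1)).card + (A ∩ B).card)

/-- The Clifford product on `ℝ_n`. -/
def cmul (f g : Cl n) : Cl n :=
  fun C => ∑ A : Finset (Fin n), csign A (symmDiff A C) * f A * g (symmDiff A C)

/-- The unit `1` of `ℝ_n`. -/
def cone : Cl n := fun A => if A = (∅ : Finset (Fin n)) then 1 else 0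

/-- The generator `e_j`. -/
def e (j : Fin n) : Cl n := fun A => if A = {j} then 1 else 0

/-- Clifford conjugation: the anti-automorphism with `1̄ = 1` and `ē_j = -e_j`;
on the basis, `conj e_A = (-1)^(|A|(|A|+1)/2) e_A`. -/
def conj (f : Cl n) : Cl n :=
  fun A => (-1 : ℝ) ^ (A.card * (A.card + 1) / 2) * f A

/-- Scalar part `Re f = f_∅`. -/
def re (f : Cl n) : ℝ := f ∅

/-- Squared norm `|f|² = Σ_A f_A²`. -/
def normSq (f : Cl n) : ℝ := ∑ A : Finset (Fin n), (f A) ^ 2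

/-- Embedding of a Euclidean vector as the Clifford vector `x = Σ_j x_j e_j`. -/
def vec (x : Fin n → ℝ) : Cl n := ∑ j : Fin n, x j • e j

/-- Embedding of a real scalar into `ℝ_n`. -/
def scal (a : ℝ) : Cl n := a • cone

/-- The Euclidean norm `|x|` of a point of `ℝⁿ`. -/
def nrm (x : Fin n → ℝ) : ℝ := Real.sqrt (∑ j : Fin n, (x j) ^ 2)

/-- `j`-th partial derivative of a Clifford-valued function. -/
def pd (j : Fin n) (u : (Fin n → ℝ) → Cl n) (x : Fin n → ℝ) : Cl n :=
  fderiv ℝ u x (Pi.single j 1)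

/-- The Dirac operator `Du = Σ_j e_j ∂_j u`. -/
def Dirac (u : (Fin n → ℝ) → Cl n) : (Fin n → ℝ) → Cl n :=
  fun x => ∑ j : Fin n, cmul (e j) (pd j u x)

/-- `j`-th partial derivative of a scalar function. -/
def pds (j : Fin n) (φ : (Fin n → ℝ) → ℝ) (x : Fin n → ℝ) : ℝ :=
  fderiv ℝ φ x (Pi.single j 1)

/-- `Dφ = Σ_j (∂_j φ) e_j` as a Clifford vector. -/
def Dgrad (φ : (Fin n → ℝ) → ℝ) (x : Fin n → ℝ) : Cl n :=
  vec (fun j => pds j φ x)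

/-- Laplacian of a scalar function, `Δφ = Σ_j ∂_j² φ`. -/
def lap (φ : (Fin n → ℝ) → ℝ) (x : Fin n → ℝ) : ℝ :=
  ∑ j : Fin n, pds j (pds j φ) x

/-- Componentwise Laplacian of a Clifford-valued function. -/
def clap (u : (Fin n → ℝ) → Cl n) (x : Fin n → ℝ) : Cl n :=
  ∑ j : Fin n, pd j (pd j u) x

/-- `|∇φ|² = Σ_j (∂_j φ)²`. -/
def gradSq (φ : (Fin n → ℝ) → ℝ) (x : Fin n → ℝ) : ℝ :=
  ∑ j : Fin n, (pds j φ x) ^ 2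

/-- The formal adjoint `δ_φ u = Du - (Dφ)u` of the Dirac operator. -/
def delta (φ : (Fin n → ℝ) → ℝ) (u : (Fin n → ℝ) → Cl n) : (Fin n → ℝ) → Cl n :=
  fun x => Dirac u x - cmul (Dgrad φ x) (u x)

/-- `u ∈ C_c^∞(Ω, ℝ_n)`: a smooth compactly supported function with support in `Ω`. -/
def IsTest (Ω : Set (Fin n → ℝ)) (u : (Fin n → ℝ) → Cl n) : Prop :=
  ContDiff ℝ (⊤ : ℕ∞) u ∧ HasCompactSupport u ∧ tsupport u ⊆ Ω

/-- Squared weighted L² norm `‖u‖²_φ = ∫_Ω |u|² e^{-φ} dV`. -/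
def wnorm (Ω : Set (Fin n → ℝ)) (φ : (Fin n → ℝ) → ℝ) (u : (Fin n → ℝ) → Cl n) : ℝ :=
  ∫ x in Ω, normSq (u x) * Real.exp (-φ x)

/-- Weighted inner product `⟨u, v⟩_φ = ∫_Ω Re(u v̄) e^{-φ} dV`. -/
def wip (Ω : Set (Fin n → ℝ)) (φ : (Fin n → ℝ) → ℝ)
    (u v : (Fin n → ℝ) → Cl n) : ℝ :=
  ∫ x in Ω, re (cmul (u x) (conj (v x))) * Real.exp (-φ x)

/-- Membership in `L²_φ(Ω, ℝ_n)`. -/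
def MemL2 (Ω : Set (Fin n → ℝ)) (φ : (Fin n → ℝ) → ℝ) (u : (Fin n → ℝ) → Cl n) : Prop :=
  AEStronglyMeasurable u (volume.restrict Ω) ∧
    IntegrableOn (fun x => normSq (u x) * Real.exp (-φ x)) Ω

/-- `Du = f` in the sense of distributions on `Ω`:
`⟨f, v⟩_0 = ⟨u, Dv⟩_0` for all test functions `v`. -/
def DistDirac (Ω : Set (Fin n → ℝ)) (u f : (Fin n → ℝ) → Cl n) : Prop :=
  ∀ v : (Fin n → ℝ) → Cl n, IsTest Ω v → wip Ω 0 f v = wip Ω 0 u (Dirac v)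

/-- `Δu = f` in the sense of distributions on `Ω`. -/
def DistLap (Ω : Set (Fin n → ℝ)) (u f : (Fin n → ℝ) → Cl n) : Prop :=
  ∀ v : (Fin n → ℝ) → Cl n, IsTest Ω v → wip Ω 0 f v = wip Ω 0 u (clap v)

/-- A domain: a connected open set. -/
def IsDomain (Ω : Set (Fin n → ℝ)) : Prop := IsOpen Ω ∧ IsConnected Ω

end Cliff

/-!
Write `E` for left multiplication by `e₁` and `w = e^{-x₁²}`. Since `Dφ = 2x₁e₁`, we have
`δu = Du - 2x₁Eu`, and the Clifford relations give `D(Eu) = -E Du - 2∂₁u`. Expanding both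
squares, `|δu|² - |D(Eu)|²` is `4x₁²|u|² - 4x₁⟨∂₁u, u⟩` plus, for each `j ≠ 1`, a mixed term
`4⟨e₁e_j ∂_j u, x₁u - ∂₁u⟩`. After multiplication by `w`, the first part is `2|u|²w` up to the
derivative `∂₁(-2x₁w|u|²)`. Because `e₁e_j` is skew-adjoint and second derivatives commute, each
mixed term is `2(∂₁F_{jj} - ∂_jF_{j1})` with `F_{jk} = w⟨e₁e_j u, ∂_k u⟩`. Integrals of
derivatives of compactly supported functions vanish.
-/

section DotProduct

variable {ι E : Type*} [Fintype ι] [NormedAddCommGroup E] [NormedSpace ℝ E]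

def dotProductCLM : (ι → ℝ) →L[ℝ] (ι → ℝ) →L[ℝ] ℝ :=
  LinearMap.toContinuousLinearMap
    ((LinearMap.toContinuousLinearMap : ((ι → ℝ) →ₗ[ℝ] ℝ) ≃ₗ[ℝ] _).toLinearMap ∘ₗ
      dotProductBilin ℝ ℝ)

lemma dotProductCLM_apply (f g : ι → ℝ) : dotProductCLM f g = f ⬝ᵥ g := rfl

@[fun_prop]
lemma ContDiff.dotProduct {m : WithTop ℕ∞} {f g : E → ι → ℝ} (hf : ContDiff ℝ m f)
    (hg : ContDiff ℝ m g) : ContDiff ℝ m (fun y => f y ⬝ᵥ g y) :=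
  ((dotProductCLM (ι := ι)).contDiff.comp hf).clm_apply hg

@[fun_prop]
lemma DifferentiableAt.dotProduct {f g : E → ι → ℝ} {x : E} (hf : DifferentiableAt ℝ f x)
    (hg : DifferentiableAt ℝ g x) : DifferentiableAt ℝ (fun y => f y ⬝ᵥ g y) x :=
  (dotProductCLM.hasFDerivAt_of_bilinear hf.hasFDerivAt hg.hasFDerivAt).differentiableAt

lemma fderiv_dotProduct {f g : E → ι → ℝ} {x : E} (hf : DifferentiableAt ℝ f x)
    (hg : DifferentiableAt ℝ g x) (v : E) :
    fderiv ℝ (fun y => f y ⬝ᵥ g y) x v = fderiv ℝ f x v ⬝ᵥ g x + f x ⬝ᵥ fderiv ℝ g x v := by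
  simp only [← dotProductCLM_apply, dotProductCLM.fderiv_of_bilinear hf hg]
  simp [dotProductCLM_apply, add_comm]

end DotProduct

lemma hasDerivAt_exp_neg_sq (t : ℝ) :
    HasDerivAt (fun t => Real.exp (-t ^ 2)) (-2 * t * Real.exp (-t ^ 2)) t := by
  have h : HasDerivAt (fun t : ℝ => -t ^ 2) (-(2 * t)) t := by
    simpa using (hasDerivAt_pow 2 t).fun_neg
  convert h.exp using 1
  ring

namespace Cliff

open Finset

variable {n : ℕ}

/-- The coefficient of `e_C` in `e_j e_{{j} ∆ C}`. -/
def lsign (j : Fin n) (C : Finset (Fin n)) : ℝ := csign {j} (symmDiff {j} C)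

lemma csign_singleton (j : Fin n) (B : Finset (Fin n)) :
    csign {j} B = (-1) ^ #{b ∈ B | b < j} * if j ∈ B then -1 else 1 := by
  have hprod : {p ∈ {j} ×ˢ B | p.2 < p.1} = {j} ×ˢ {b ∈ B | b < j} := by
    ext ⟨a, b⟩
    simp only [mem_filter, mem_product, mem_singleton]
    grind
  rw [csign, hprod, card_product, card_singleton, one_mul, pow_add]
  split_ifs with h
  · rw [singleton_inter_of_mem h, card_singleton, pow_one]
  · rw [singleton_inter_of_notMem h, card_empty, pow_zero]

lemma filter_symmDiff_singleton_lt (j : Fin n) (C : Finset (Fin n)) :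
    {c ∈ symmDiff {j} C | c < j} = {c ∈ C | c < j} := by
  ext c
  simp only [mem_filter, mem_symmDiff, mem_singleton]
  grind

lemma lsign_eq (j : Fin n) (C : Finset (Fin n)) :
    lsign j C = (-1) ^ #{c ∈ C | c < j} * if j ∈ C then 1 else -1 := by
  rw [lsign, csign_singleton, filter_symmDiff_singleton_lt]
  by_cases h : j ∈ C <;> simp [h, mem_symmDiff]

lemma neg_one_pow_card_symmDiff_singleton (j : Fin n) (s : Finset (Fin n)) :
    (-1 : ℝ) ^ #(symmDiff {j} s) = -(-1) ^ #s := by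
  by_cases h : j ∈ s
  · have : symmDiff {j} s = s.erase j := by
      ext
      simp only [mem_symmDiff, mem_singleton, mem_erase]
      grind
    rw [this, ← card_erase_add_one h, pow_succ]
    ring
  · have : symmDiff {j} s = insert j s := by
      ext
      simp only [mem_symmDiff, mem_singleton, mem_insert]
      grind
    rw [this, card_insert_of_notMem h, pow_succ]
    ring

lemma lsign_mul_self (j : Fin n) (C : Finset (Fin n)) : lsign j C * lsign j C = 1 := by
  rw [lsign_eq]
  split_ifs <;> simp [← pow_add, ← two_mul, pow_mul]

lemma lsign_mul_lsign_symmDiff (j : Fin n) (C : Finset (Fin n)) :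
    lsign j C * lsign j (symmDiff {j} C) = -1 := by
  rw [lsign_eq, lsign_eq, filter_symmDiff_singleton_lt]
  by_cases h : j ∈ C <;> simp [h, mem_symmDiff, ← pow_add, ← two_mul, pow_mul]

lemma lsign_anticomm {j k : Fin n} (hjk : j ≠ k) (C : Finset (Fin n)) :
    lsign j C * lsign k (symmDiff {j} C) = -(lsign k C * lsign j (symmDiff {k} C)) := by
  have hfilter (a b : Fin n) : {c ∈ symmDiff {a} C | c < b} =
      if a < b then symmDiff {a} {c ∈ C | c < b} else {c ∈ C | c < b} := by
    split_ifs <;>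
    · ext c
      simp only [mem_filter, mem_symmDiff, mem_singleton]
      grind
  have hmem {a b : Fin n} (hab : a ≠ b) : b ∈ symmDiff {a} C ↔ b ∈ C := by
    simp only [mem_symmDiff, mem_singleton]
    grind
  simp only [lsign_eq, hfilter, hmem hjk, hmem hjk.symm]
  rcases lt_or_gt_of_ne hjk with h | h <;>
  · simp only [h, if_true, not_lt_of_gt h, if_false, neg_one_pow_card_symmDiff_singleton]
    split_ifs <;> ring

def lmul (j : Fin n) : Cl n →L[ℝ] Cl n :=
  LinearMap.toContinuousLinearMap
    { toFun := fun f C => lsign j C * f (symmDiff {j} C)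
      map_add' := fun f g => by funext C; simp [mul_add]
      map_smul' := fun c f => by funext C; simp [mul_left_comm] }

lemma lmul_apply (j : Fin n) (f : Cl n) (C : Finset (Fin n)) :
    lmul j f C = lsign j C * f (symmDiff {j} C) := rfl

lemma cmul_e (j : Fin n) (f : Cl n) : cmul (e j) f = lmul j f := by
  funext C
  rw [cmul, sum_eq_single {j} (fun A _ hA => by simp [e, hA]) (by simp)]
  simp [e, lmul_apply, lsign]

lemma cmul_smul_left (c : ℝ) (f g : Cl n) : cmul (c • f) g = c • cmul f g := by
  funext C
  simp only [cmul, Pi.smul_apply, smul_eq_mul, mul_sum]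
  exact sum_congr rfl fun A _ => by ring

lemma lmul_lmul_self (j : Fin n) (f : Cl n) : lmul j (lmul j f) = -f := by
  funext C
  rw [lmul_apply, lmul_apply, symmDiff_symmDiff_cancel_left, ← mul_assoc,
    lsign_mul_lsign_symmDiff, Pi.neg_apply, neg_one_mul]

lemma lmul_lmul_of_ne {j k : Fin n} (hjk : j ≠ k) (f : Cl n) :
    lmul j (lmul k f) = -lmul k (lmul j f) := by
  funext C
  have hC : symmDiff {k} (symmDiff {j} C) = symmDiff {j} (symmDiff {k} C) := by
    rw [← symmDiff_assoc, ← symmDiff_assoc, symmDiff_comm ({k} : Finset (Fin n))]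
  simp only [lmul_apply, Pi.neg_apply, hC, ← mul_assoc, lsign_anticomm hjk]
  ring

lemma lmul_dotProduct_lmul (j : Fin n) (f g : Cl n) : lmul j f ⬝ᵥ lmul j g = f ⬝ᵥ g := by
  refine Fintype.sum_equiv
    (Function.Involutive.toPerm _ fun C => symmDiff_symmDiff_cancel_left {j} C) _ _ fun C => ?_
  change lmul j f C * lmul j g C = f (symmDiff {j} C) * g (symmDiff {j} C)
  rw [lmul_apply, lmul_apply]
  linear_combination (f (symmDiff {j} C) * g (symmDiff {j} C)) * lsign_mul_self j C

lemma lmul_dotProduct (j : Fin n) (f g : Cl n) : lmul j f ⬝ᵥ g = -(f ⬝ᵥ lmul j g) := by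
  conv_lhs => rw [← neg_neg g, ← lmul_lmul_self j g]
  rw [dotProduct_neg, lmul_dotProduct_lmul]

lemma lmul_lmul_dotProduct_of_ne {i j : Fin n} (hij : i ≠ j) (f g : Cl n) :
    lmul i (lmul j f) ⬝ᵥ g = -(lmul i (lmul j g) ⬝ᵥ f) := by
  rw [lmul_dotProduct, lmul_dotProduct, lmul_lmul_of_ne hij.symm, dotProduct_neg,
    dotProduct_comm, neg_neg]

lemma normSq_eq_dotProduct (f : Cl n) : normSq f = f ⬝ᵥ f := by
  simp [normSq, dotProduct, sq]

lemma normSq_nonneg (f : Cl n) : 0 ≤ normSq f :=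
  sum_nonneg fun _ _ => sq_nonneg _

lemma sum_lmul_lmul (j₀ : Fin n) (p : Fin n → Cl n) :
    ∑ j, lmul j (lmul j₀ (p j)) = -(lmul j₀ (∑ j, lmul j (p j)) + (2 : ℝ) • p j₀) := by
  rw [map_sum, ← add_sum_erase _ _ (mem_univ j₀), ← add_sum_erase _ _ (mem_univ j₀),
    lmul_lmul_self, sum_congr rfl fun j hj => lmul_lmul_of_ne (ne_of_mem_erase hj) (p j),
    sum_neg_distrib, two_smul]
  abel

/-- The pointwise algebra behind the theorem, with `p j = ∂_j u(x)`, `f = u(x)` and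
`t = x_{j₀}`. -/
lemma normSq_sum_lmul_sub (j₀ : Fin n) (t : ℝ) (f : Cl n) (p : Fin n → Cl n) :
    normSq (∑ j, lmul j (p j) - (2 * t) • lmul j₀ f) =
      normSq (∑ j, lmul j (lmul j₀ (p j))) + (4 * t ^ 2 * normSq f - 4 * t * (p j₀ ⬝ᵥ f)) +
        4 * ∑ j ∈ univ.erase j₀,
          (t * (lmul j₀ (lmul j (p j)) ⬝ᵥ f) - lmul j₀ (lmul j (p j)) ⬝ᵥ p j₀) := by
  rw [sum_lmul_lmul, sum_sub_distrib, ← mul_sum]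
  set D := ∑ j, lmul j (p j)
  have hDf : D ⬝ᵥ lmul j₀ f = p j₀ ⬝ᵥ f - ∑ j ∈ univ.erase j₀, lmul j₀ (lmul j (p j)) ⬝ᵥ f := by
    rw [sum_dotProduct, ← add_sum_erase _ _ (mem_univ j₀), lmul_dotProduct_lmul,
      sub_eq_add_neg, ← sum_neg_distrib]
    congr 1
    exact sum_congr rfl fun j _ => by rw [lmul_dotProduct j₀, neg_neg]
  have hDp : lmul j₀ D ⬝ᵥ p j₀ =
      -(p j₀ ⬝ᵥ p j₀) + ∑ j ∈ univ.erase j₀, lmul j₀ (lmul j (p j)) ⬝ᵥ p j₀ := by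
    rw [map_sum, sum_dotProduct, ← add_sum_erase _ _ (mem_univ j₀), lmul_lmul_self,
      neg_dotProduct]
  simp only [normSq_eq_dotProduct, neg_dotProduct, dotProduct_neg, add_dotProduct,
    dotProduct_add, sub_dotProduct, dotProduct_sub, smul_dotProduct, dotProduct_smul,
    lmul_dotProduct_lmul, smul_eq_mul, dotProduct_comm (p j₀) (lmul j₀ D),
    dotProduct_comm (lmul j₀ f) D]
  linear_combination (-4 * t) * hDf - 4 * hDp

variable {x : Fin n → ℝ}

lemma pd_clm_comp (L : Cl n →L[ℝ] Cl n) {u : (Fin n → ℝ) → Cl n}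
    (hu : DifferentiableAt ℝ u x) (j : Fin n) : pd j (fun y => L (u y)) x = L (pd j u x) := by
  rw [pd, pd, show (fun y => L (u y)) = L ∘ u from rfl,
    (L.hasFDerivAt.comp x hu.hasFDerivAt).fderiv]
  rfl

lemma pds_mul {f g : (Fin n → ℝ) → ℝ} (hf : DifferentiableAt ℝ f x)
    (hg : DifferentiableAt ℝ g x) (j : Fin n) :
    pds j (fun y => f y * g y) x = pds j f x * g x + f x * pds j g x := by
  simp only [pds, fderiv_fun_mul hf hg, add_apply, smul_apply, smul_eq_mul]
  ring

lemma pds_dotProduct {f g : (Fin n → ℝ) → Cl n} (hf : DifferentiableAt ℝ f x)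
    (hg : DifferentiableAt ℝ g x) (j : Fin n) :
    pds j (fun y => f y ⬝ᵥ g y) x = pd j f x ⬝ᵥ g x + f x ⬝ᵥ pd j g x :=
  fderiv_dotProduct hf hg _

lemma pds_comp_apply {g : ℝ → ℝ} {k : Fin n} (hg : DifferentiableAt ℝ g (x k)) (j : Fin n) :
    pds j (fun y => g (y k)) x = deriv g (x k) * (Pi.single j 1 : Fin n → ℝ) k := by
  have h : HasFDerivAt (fun y : Fin n → ℝ => g (y k))
      (deriv g (x k) • ContinuousLinearMap.proj (R := ℝ) (φ := fun _ : Fin n => ℝ) k) x :=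
    hg.hasDerivAt.comp_hasFDerivAt x (hasFDerivAt_apply k x)
  simp [pds, h.fderiv]

lemma pd_pd_comm {u : (Fin n → ℝ) → Cl n} (hu : ContDiff ℝ 2 u) (j k : Fin n) :
    pd j (pd k u) x = pd k (pd j u) x := by
  have hd : Differentiable ℝ (fderiv ℝ u) :=
    (hu.fderiv_right (m := 1) (by norm_num)).differentiable (by norm_num)
  change fderiv ℝ (fun y => fderiv ℝ u y (Pi.single k 1)) x (Pi.single j 1) =
    fderiv ℝ (fun y => fderiv ℝ u y (Pi.single j 1)) x (Pi.single k 1)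
  simp only [fderiv_clm_apply (hd x) (differentiableAt_const _)]
  simp only [fderiv_fun_const, Pi.zero_apply, ContinuousLinearMap.comp_zero, zero_add,
    ContinuousLinearMap.flip_apply]
  exact hu.contDiffAt.isSymmSndFDerivAt (by simp) _ _

lemma contDiff_pd {m : WithTop ℕ∞} {u : (Fin n → ℝ) → Cl n} (hu : ContDiff ℝ (m + 1) u)
    (j : Fin n) : ContDiff ℝ m (pd j u) :=
  (hu.fderiv_right le_rfl).clm_apply contDiff_const

lemma pd_eq_zero_of_notMem_tsupport {u : (Fin n → ℝ) → Cl n} (hx : x ∉ tsupport u)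
    (j : Fin n) : pd j u x = 0 := by
  simp [pd, fderiv_of_notMem_tsupport ℝ hx]

lemma integrable_pds {F : (Fin n → ℝ) → ℝ} (hF : ContDiff ℝ 1 F) (hc : HasCompactSupport F)
    (j : Fin n) : Integrable (pds j F) :=
  ((hF.continuous_fderiv one_ne_zero).clm_apply continuous_const).integrable_of_hasCompactSupport
    (hc.fderiv_apply ℝ _)

lemma integral_pds_eq_zero {F : (Fin n → ℝ) → ℝ} (hF : ContDiff ℝ 1 F)
    (hc : HasCompactSupport F) (j : Fin n) : ∫ x, pds j F x = 0 := by
  have h := integral_mul_fderiv_eq_neg_fderiv_mul_of_integrable (μ := volume)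
    (f := fun _ => (1 : ℝ)) (g := F) (v := Pi.single j 1)
    (by simp) (by simp only [one_mul]; exact integrable_pds hF hc j)
    (by simpa using hF.continuous.integrable_of_hasCompactSupport hc)
    (fun _ _ => differentiableAt_const _) (fun x _ => hF.differentiable one_ne_zero x)
  simp only [one_mul, fderiv_fun_const, Pi.zero_apply, zero_apply, zero_mul, integral_zero,
    neg_zero] at h
  exact h

lemma Dirac_eq_sum (v : (Fin n → ℝ) → Cl n) (x : Fin n → ℝ) :
    Dirac v x = ∑ j, lmul j (pd j v x) := by
  simp only [Dirac, cmul_e]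

lemma Dirac_cmul_e {u : (Fin n → ℝ) → Cl n} (hu : Differentiable ℝ u) (j₀ : Fin n) :
    Dirac (fun y => cmul (e j₀) (u y)) x = ∑ j, lmul j (lmul j₀ (pd j u x)) := by
  simp only [cmul_e, Dirac_eq_sum, pd_clm_comp (lmul j₀) (hu x)]

lemma Dgrad_sq_apply (j₀ : Fin n) : Dgrad (fun y => (y j₀) ^ 2) x = (2 * x j₀) • e j₀ := by
  have hpds (j : Fin n) :
      pds j (fun y => (y j₀) ^ 2) x = 2 * x j₀ * (Pi.single j 1 : Fin n → ℝ) j₀ := by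
    rw [pds_comp_apply (g := fun t => t ^ 2) (by fun_prop)]
    simp
  rw [Dgrad, vec, sum_eq_single j₀ (fun j _ hj => by simp [hpds, hj.symm]) (by simp), hpds]
  simp

lemma delta_sq_apply (u : (Fin n → ℝ) → Cl n) (j₀ : Fin n) :
    delta (fun y => (y j₀) ^ 2) u x = ∑ j, lmul j (pd j u x) - (2 * x j₀) • lmul j₀ (u x) := by
  rw [delta, Dgrad_sq_apply, cmul_smul_left, cmul_e, Dirac_eq_sum]

lemma pds_exp_neg_sq (j₀ i : Fin n) :
    pds i (fun y => Real.exp (-(y j₀) ^ 2)) x =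
      -2 * x j₀ * Real.exp (-(x j₀) ^ 2) * (Pi.single i 1 : Fin n → ℝ) j₀ := by
  rw [pds_comp_apply (hasDerivAt_exp_neg_sq (x j₀)).differentiableAt,
    (hasDerivAt_exp_neg_sq (x j₀)).deriv]

def normFlux (u : (Fin n → ℝ) → Cl n) (j₀ : Fin n) : (Fin n → ℝ) → ℝ := fun y =>
  y j₀ * Real.exp (-(y j₀) ^ 2) * normSq (u y)

def crossFlux (u : (Fin n → ℝ) → Cl n) (j₀ j k : Fin n) : (Fin n → ℝ) → ℝ := fun y =>
  Real.exp (-(y j₀) ^ 2) * ((lmul j₀ ∘L lmul j) (u y) ⬝ᵥ pd k u y)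

lemma pds_normFlux {u : (Fin n → ℝ) → Cl n} (hu : Differentiable ℝ u) (j₀ : Fin n) :
    pds j₀ (normFlux u j₀) x =
      (1 - 2 * x j₀ ^ 2) * Real.exp (-(x j₀) ^ 2) * normSq (u x) +
        2 * x j₀ * Real.exp (-(x j₀) ^ 2) * (pd j₀ u x ⬝ᵥ u x) := by
  unfold normFlux
  simp only [normSq_eq_dotProduct]
  rw [pds_mul (f := fun y => y j₀ * Real.exp (-(y j₀) ^ 2)) (by fun_prop) (by fun_prop),
    pds_comp_apply (g := fun t => t * Real.exp (-t ^ 2)) (by fun_prop),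
    ((hasDerivAt_id' (x j₀)).fun_mul (hasDerivAt_exp_neg_sq (x j₀))).deriv,
    pds_dotProduct (hu x) (hu x), dotProduct_comm (u x) (pd j₀ u x)]
  simp only [one_mul, neg_mul, mul_neg, Pi.single_eq_same, mul_one]
  ring

lemma pds_crossFlux {u : (Fin n → ℝ) → Cl n} (hu : ContDiff ℝ 2 u) (j₀ j k i : Fin n) :
    pds i (crossFlux u j₀ j k) x =
      -2 * x j₀ * Real.exp (-(x j₀) ^ 2) * (Pi.single i 1 : Fin n → ℝ) j₀ *
          (lmul j₀ (lmul j (u x)) ⬝ᵥ pd k u x) +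
        Real.exp (-(x j₀) ^ 2) * (lmul j₀ (lmul j (pd i u x)) ⬝ᵥ pd k u x +
          lmul j₀ (lmul j (u x)) ⬝ᵥ pd i (pd k u) x) := by
  have hu1 : Differentiable ℝ u := hu.differentiable (by norm_num)
  have hpd : Differentiable ℝ (pd k u) := (contDiff_pd (m := 1) hu k).differentiable one_ne_zero
  unfold crossFlux
  rw [pds_mul (by fun_prop) (by fun_prop), pds_exp_neg_sq,
    pds_dotProduct (by fun_prop) (hpd x), pd_clm_comp _ (hu1 x)]
  rfl

lemma pds_crossFlux_sub {u : (Fin n → ℝ) → Cl n} (hu : ContDiff ℝ 2 u) {j₀ j : Fin n}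
    (hj : j ≠ j₀) :
    pds j₀ (crossFlux u j₀ j j) x - pds j (crossFlux u j₀ j j₀) x =
      2 * Real.exp (-(x j₀) ^ 2) * (x j₀ * (lmul j₀ (lmul j (pd j u x)) ⬝ᵥ u x) -
        lmul j₀ (lmul j (pd j u x)) ⬝ᵥ pd j₀ u x) := by
  rw [pds_crossFlux hu, pds_crossFlux hu, pd_pd_comm hu j₀ j, Pi.single_eq_same,
    Pi.single_eq_of_ne hj.symm, lmul_lmul_dotProduct_of_ne hj.symm (u x),
    lmul_lmul_dotProduct_of_ne hj.symm (pd j₀ u x)]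
  ring

def fluxDivergence (u : (Fin n → ℝ) → Cl n) (j₀ : Fin n) : (Fin n → ℝ) → ℝ := fun x =>
  -2 * pds j₀ (normFlux u j₀) x +
    2 * ∑ j ∈ univ.erase j₀, (pds j₀ (crossFlux u j₀ j j) x - pds j (crossFlux u j₀ j j₀) x)

lemma normSq_delta_mul_exp {u : (Fin n → ℝ) → Cl n} (hu : ContDiff ℝ 2 u) (j₀ : Fin n) :
    normSq (delta (fun y => (y j₀) ^ 2) u x) * Real.exp (-(x j₀) ^ 2) =
      normSq (Dirac (fun y => cmul (e j₀) (u y)) x) * Real.exp (-(x j₀) ^ 2) +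
        2 * (normSq (u x) * Real.exp (-(x j₀) ^ 2)) + fluxDivergence u j₀ x := by
  have hu1 : Differentiable ℝ u := hu.differentiable (by norm_num)
  unfold fluxDivergence
  rw [delta_sq_apply, Dirac_cmul_e hu1, normSq_sum_lmul_sub, pds_normFlux hu1,
    sum_congr rfl fun j hj => pds_crossFlux_sub hu (ne_of_mem_erase hj), ← mul_sum]
  ring

section Integrals

variable {u : (Fin n → ℝ) → Cl n}

lemma contDiff_normFlux (hu : ContDiff ℝ 1 u) (j₀ : Fin n) : ContDiff ℝ 1 (normFlux u j₀) := by
  unfold normFlux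
  simp only [normSq_eq_dotProduct]
  fun_prop

lemma hasCompactSupport_normFlux (hc : HasCompactSupport u) (j₀ : Fin n) :
    HasCompactSupport (normFlux u j₀) :=
  .intro hc fun x hx => by simp [normFlux, image_eq_zero_of_notMem_tsupport hx, normSq]

lemma contDiff_crossFlux (hu : ContDiff ℝ 2 u) (j₀ j k : Fin n) :
    ContDiff ℝ 1 (crossFlux u j₀ j k) := by
  have := contDiff_pd (m := 1) hu k
  have : ContDiff ℝ 1 u := hu.of_le (by norm_num)
  unfold crossFlux
  fun_prop

lemma hasCompactSupport_crossFlux (hc : HasCompactSupport u) (j₀ j k : Fin n) :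
    HasCompactSupport (crossFlux u j₀ j k) :=
  .intro hc fun x hx => by simp [crossFlux, image_eq_zero_of_notMem_tsupport hx]

lemma integrable_pds_crossFlux_sub (hu : ContDiff ℝ 2 u) (hc : HasCompactSupport u)
    (j₀ j : Fin n) :
    Integrable fun x => pds j₀ (crossFlux u j₀ j j) x - pds j (crossFlux u j₀ j j₀) x :=
  (integrable_pds (contDiff_crossFlux hu ..) (hasCompactSupport_crossFlux hc ..) j₀).sub
    (integrable_pds (contDiff_crossFlux hu ..) (hasCompactSupport_crossFlux hc ..) j)

lemma integrable_fluxDivergence (hu : ContDiff ℝ 2 u) (hc : HasCompactSupport u) (j₀ : Fin n) :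
    Integrable (fluxDivergence u j₀) :=
  ((integrable_pds (contDiff_normFlux (hu.of_le (by norm_num)) j₀)
    (hasCompactSupport_normFlux hc j₀) j₀).const_mul (-2)).fun_add
    ((integrable_finsetSum _ fun j _ => integrable_pds_crossFlux_sub hu hc j₀ j).const_mul 2)

lemma integral_fluxDivergence (hu : ContDiff ℝ 2 u) (hc : HasCompactSupport u) (j₀ : Fin n) :
    ∫ x, fluxDivergence u j₀ x = 0 := by
  have hF₀ := integrable_pds (contDiff_normFlux (hu.of_le (by norm_num)) j₀)
    (hasCompactSupport_normFlux hc j₀) j₀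
  have hsum := integrable_finsetSum (univ.erase j₀) fun j _ =>
    integrable_pds_crossFlux_sub hu hc j₀ j
  unfold fluxDivergence
  rw [integral_add (hF₀.const_mul _) (hsum.const_mul _), integral_const_mul,
    integral_const_mul, integral_pds_eq_zero (contDiff_normFlux (hu.of_le (by norm_num)) j₀)
    (hasCompactSupport_normFlux hc j₀), integral_finsetSum _ fun j _ =>
    integrable_pds_crossFlux_sub hu hc j₀ j]
  simp [integral_sub, integrable_pds, integral_pds_eq_zero, contDiff_crossFlux hu,
    hasCompactSupport_crossFlux hc]

lemma integrable_normSq_mul_exp {v : (Fin n → ℝ) → Cl n} (hc : HasCompactSupport u)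
    (hv : Continuous v) (hvu : ∀ x ∉ tsupport u, v x = 0) (j₀ : Fin n) :
    Integrable fun x => normSq (v x) * Real.exp (-(x j₀) ^ 2) := by
  refine Continuous.integrable_of_hasCompactSupport ?_ (.intro hc fun x hx => ?_)
  · simp only [normSq_eq_dotProduct]
    fun_prop
  · simp [hvu x hx, normSq]

theorem integral_normSq_delta_mul_exp (hu : ContDiff ℝ 2 u) (hc : HasCompactSupport u)
    (j₀ : Fin n) :
    ∫ x, normSq (delta (fun y => (y j₀) ^ 2) u x) * Real.exp (-(x j₀) ^ 2) =
      (∫ x, normSq (Dirac (fun y => cmul (e j₀) (u y)) x) * Real.exp (-(x j₀) ^ 2)) +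
        2 * ∫ x, normSq (u x) * Real.exp (-(x j₀) ^ 2) := by
  have hu1 : ContDiff ℝ 1 u := hu.of_le (by norm_num)
  have hpd (k : Fin n) : ContDiff ℝ 1 (pd k u) := contDiff_pd hu k
  have hD : Integrable fun x =>
      normSq (Dirac (fun y => cmul (e j₀) (u y)) x) * Real.exp (-(x j₀) ^ 2) := by
    simp only [Dirac_cmul_e (hu1.differentiable one_ne_zero)]
    exact integrable_normSq_mul_exp hc (by fun_prop)
      (fun x hx => by simp [pd_eq_zero_of_notMem_tsupport hx]) j₀
  have hN := integrable_normSq_mul_exp hc hu1.continuous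
    (fun _ => image_eq_zero_of_notMem_tsupport) j₀
  simp_rw [normSq_delta_mul_exp hu j₀]
  rw [integral_add (hD.fun_add (hN.const_mul 2)) (integrable_fluxDivergence hu hc j₀),
    integral_fluxDivergence hu hc j₀, add_zero, integral_add hD (hN.const_mul 2),
    integral_const_mul]

end Integrals

lemma wnorm_nonneg (Ω : Set (Fin n → ℝ)) (φ : (Fin n → ℝ) → ℝ) (f : (Fin n → ℝ) → Cl n) :
    0 ≤ wnorm Ω φ f :=
  integral_nonneg fun _ => mul_nonneg (normSq_nonneg _) (Real.exp_pos _).le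

lemma wnorm_eq_integral {Ω : Set (Fin n → ℝ)} {f : (Fin n → ℝ) → Cl n} (hf : ∀ x ∉ Ω, f x = 0)
    (φ : (Fin n → ℝ) → ℝ) : wnorm Ω φ f = ∫ x, normSq (f x) * Real.exp (-φ x) :=
  setIntegral_eq_integral_of_forall_compl_eq_zero fun x hx => by simp [hf x hx, normSq]

end Cliff

open Cliff in
theorem dirac_single_quadratic_weight_general (n : ℕ) (hn : 0 < n)
    (Ω : Set (Fin n → ℝ))
    (φ : (Fin n → ℝ) → ℝ) (hφ : φ = fun x => (x ⟨0, hn⟩) ^ 2)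
    (u : (Fin n → ℝ) → Cl n) (hu : Cliff.IsTest Ω u) :
    Cliff.wnorm Ω φ (Cliff.delta φ u) =
      Cliff.wnorm Ω φ
        (Cliff.Dirac (fun y => Cliff.cmul (Cliff.e ⟨0, hn⟩) (u y))) +
        2 * Cliff.wnorm Ω φ u ∧
    2 * Cliff.wnorm Ω φ u ≤ Cliff.wnorm Ω φ (Cliff.delta φ u) := by
  obtain ⟨hsmooth, hc, hΩ⟩ := hu
  have hdiff : Differentiable ℝ u := hsmooth.differentiable (by simp)
  have hpd {x} (hx : x ∉ Ω) (j : Fin n) : pd j u x = 0 :=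
    pd_eq_zero_of_notMem_tsupport (fun h => hx (hΩ h)) j
  have hu0 {x} (hx : x ∉ Ω) : u x = 0 := image_eq_zero_of_notMem_tsupport fun h => hx (hΩ h)
  have key : wnorm Ω φ (delta φ u) =
      wnorm Ω φ (Dirac fun y => cmul (e ⟨0, hn⟩) (u y)) + 2 * wnorm Ω φ u := by
    subst hφ
    rw [wnorm_eq_integral (fun x hx => by simp [delta_sq_apply, hpd hx, hu0 hx]),
      wnorm_eq_integral (fun x hx => by simp [Dirac_cmul_e hdiff, hpd hx]),
      wnorm_eq_integral (fun x hx => hu0 hx)]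
    exact integral_normSq_delta_mul_exp (hsmooth.of_le (by norm_cast)) hc _
  exact ⟨key, by linarith [wnorm_nonneg Ω φ (Dirac fun y => cmul (e ⟨0, hn⟩) (u y))]⟩

/-- the single quadratic weight `φ = x₁²`. For every test function
`u`: `‖Du − (Dφ)u‖²_φ = ‖D(e₁ u)‖²_φ + 2‖u‖²_φ`; in particular
`‖Du − (Dφ)u‖²_φ ≥ 2‖u‖²_φ`. -/
theorem dirac_single_quadratic_weight (n : ℕ) (hn : 0 < n)
    (Ω : Set (Fin n → ℝ)) (hΩ : Cliff.IsDomain Ω)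
    (φ : (Fin n → ℝ) → ℝ) (hφ : φ = fun x => (x ⟨0, hn⟩) ^ 2)
    (u : (Fin n → ℝ) → Cl n) (hu : Cliff.IsTest Ω u) :
    Cliff.wnorm Ω φ (Cliff.delta φ u) =
      Cliff.wnorm Ω φ
        (Cliff.Dirac (fun y => Cliff.cmul (Cliff.e ⟨0, hn⟩) (u y))) +
        2 * Cliff.wnorm Ω φ u ∧
    2 * Cliff.wnorm Ω φ u ≤ Cliff.wnorm Ω φ (Cliff.delta φ u) :=
  dirac_single_quadratic_weight_general n hn Ω φ hφ u hu
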